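/- Let PC_n^1 be the polyomino chain with n squares consisting of exactly two segments s_1 and s_2 with lengths l_1 = 2 and l_2 = n − 1. Then ZC1(PC_n^1) = 32n − 30 − 2·I{n = 4} for all n ≥ 4, and ZC2(PC_n^1) = 48n − 58 − I{n = 5} for all n ≥ 5. -/

import Mathlib

noncomputable section
open scoped Classical
open Finset

/-- Taxicab (L¹) distance between two lattice points. -/
def taxicab (u v : ℤ × ℤ) : ℕ := (u.1 - v.1).natAbs + (u.2 - v.2).natAbs

/-- `c 0, …, c (n-1)` are the lower-left corners of the `n` unit squares of a
polyomino chain: the cells are pairwise distinct and two cells share a common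
edge (i.e. their lower-left corners are at taxicab distance 1) iff they are
consecutive in the chain, so that the centers of the squares form a path. -/
def IsPolyominoChain (n : ℕ) (c : ℕ → ℤ × ℤ) : Prop :=
  (∀ i j, i < n → j < n → c i = c j → i = j) ∧
  (∀ i j, i < n → j < n → (taxicab (c i) (c j) = 1 ↔ (i = j + 1 ∨ j = i + 1)))

/-- `v` is a corner of the unit square with lower-left corner `s`. -/
def IsSquareCorner (s v : ℤ × ℤ) : Prop :=
  v = s ∨ v = s + (1, 0) ∨ v = s + (0, 1) ∨ v = s + (1, 1)

/-- The vertex set of the graph of a polyomino chain: all corners of its squares. -/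
def corners (n : ℕ) (c : ℕ → ℤ × ℤ) : Finset (ℤ × ℤ) :=
  (Finset.range n).biUnion fun i => {c i, c i + (1, 0), c i + (0, 1), c i + (1, 1)}

/-- The graph of a polyomino chain: vertices are corners of the squares, and
two corners are adjacent iff they are the endpoints of a unit side of one of
the squares of the chain. -/
def chainGraph (n : ℕ) (c : ℕ → ℤ × ℤ) : SimpleGraph (ℤ × ℤ) :=
  SimpleGraph.fromRel fun u v =>
    taxicab u v = 1 ∧ ∃ i < n, IsSquareCorner (c i) u ∧ IsSquareCorner (c i) v

/-- `tau n c v` = number of vertices of the chain graph at graph distance exactly 2 from `v`. -/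
def tau (n : ℕ) (c : ℕ → ℤ × ℤ) (v : ℤ × ℤ) : ℕ :=
  ((corners n c).filter fun u => (chainGraph n c).dist v u = 2).card

/-- First Zagreb connection index `ZC1 = ∑_{v ∈ V} τ_v²`. -/
def ZC1 (n : ℕ) (c : ℕ → ℤ × ℤ) : ℕ := ∑ v ∈ corners n c, tau n c v ^ 2

/-- Second Zagreb connection index `ZC2 = ∑_{uv ∈ E} τ_u · τ_v`
(each edge appears twice in the double sum, whence the division by 2). -/
def ZC2 (n : ℕ) (c : ℕ → ℤ × ℤ) : ℕ :=
  (∑ u ∈ corners n c, ∑ v ∈ corners n c,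
      if (chainGraph n c).Adj u v then tau n c u * tau n c v else 0) / 2

/-- The link `L_k` (for `3 ≤ k ≤ n`) of a polyomino chain: `1` if the `k`-th
square continues the current straight segment, `2` if it is attached at a kink. -/
def link (c : ℕ → ℤ × ℤ) (k : ℕ) : ℕ :=
  if c (k - 1) - c (k - 2) = c (k - 2) - c (k - 3) then 1 else 2

/-- Indicator of a proposition, as an integer. -/
def ind (P : Prop) : ℤ := if P then 1 else 0

/-- The chain `c` with `n` squares has `m` segments, of lengths `l 1, …, l m`:
there are cut positions `2 = k 0 < k 1 < ⋯ < k (m-1) < k m = n+1` such that the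
kink links (links equal to 2) are exactly at positions `k 1, …, k (m-1)`, and the
`j`-th segment has length `l j = k j - k (j-1) + 1`. -/
def HasSegments (n : ℕ) (c : ℕ → ℤ × ℤ) (m : ℕ) (l : ℕ → ℕ) : Prop :=
  ∃ k : ℕ → ℕ, k 0 = 2 ∧ k m = n + 1 ∧
    (∀ j, 1 ≤ j → j ≤ m → k (j - 1) < k j) ∧
    (∀ x, 3 ≤ x → x ≤ n → (link c x = 2 ↔ ∃ j, 1 ≤ j ∧ j ≤ m - 1 ∧ k j = x)) ∧
    (∀ j, 1 ≤ j → j ≤ m → l j = k j - k (j - 1) + 1)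

/-- The chain `c` with `n` squares has link sequence `L_3, …, L_n`. -/
def HasLinks (n : ℕ) (c : ℕ → ℤ × ℤ) (L : ℕ → ℕ) : Prop :=
  ∀ k, 3 ≤ k → k ≤ n → link c k = L k

/-- The linear chain `Li_n` (all links equal to 1). -/
def linCell : ℕ → ℤ × ℤ := fun i => ((i : ℤ), 0)

/-- The zigzag chain `Z_n` (all links equal to 2). -/
def zigCell : ℕ → ℤ × ℤ := fun i => ((((i + 1) / 2 : ℕ) : ℤ), ((i / 2 : ℕ) : ℤ))

-- canonical chain
def f : ℕ → ℤ × ℤ := fun i => if i = 0 then (0, 1) else ((i : ℤ) - 1, 0)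

def Sfin (n : ℕ) : Finset (ℤ × ℤ) :=
  (((Finset.range n).image fun x : ℕ => ((x : ℤ), (0:ℤ))) ∪
   ((Finset.range n).image fun x : ℕ => ((x : ℤ), (1:ℤ)))) ∪ {((0:ℤ), (2:ℤ)), ((1:ℤ), (2:ℤ))}

def tS (n : ℕ) (v : ℤ × ℤ) : ℕ := ((Sfin n).filter fun u => taxicab v u = 2).card

lemma mem_Sfin {n : ℕ} {p : ℤ × ℤ} :
    p ∈ Sfin n ↔ (0 ≤ p.1 ∧ p.1 ≤ (n : ℤ) - 1 ∧ (p.2 = 0 ∨ p.2 = 1)) ∨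
      ((p.1 = 0 ∨ p.1 = 1) ∧ p.2 = 2) := by
  obtain ⟨a, b⟩ := p
  simp only [Sfin, mem_union, mem_image, mem_range, mem_insert, mem_singleton, Prod.mk.injEq]
  constructor
  · rintro ((⟨x, hx, rfl, rfl⟩ | ⟨x, hx, rfl, rfl⟩) | (⟨rfl, rfl⟩ | ⟨rfl, rfl⟩))
    · omega
    · omega
    · omega
    · omega
  · rintro (⟨h0, h1, (rfl | rfl)⟩ | ⟨(rfl | rfl), rfl⟩)
    · exact Or.inl (Or.inl ⟨a.toNat, by omega, by omega, rfl⟩)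
    · exact Or.inl (Or.inr ⟨a.toNat, by omega, by omega, rfl⟩)
    · simp
    · simp

lemma isc_iff {s v : ℤ × ℤ} : IsSquareCorner s v ↔
    (v.1 = s.1 ∨ v.1 = s.1 + 1) ∧ (v.2 = s.2 ∨ v.2 = s.2 + 1) := by
  obtain ⟨a, b⟩ := s; obtain ⟨x, y⟩ := v
  simp only [IsSquareCorner, Prod.mk.injEq, Prod.mk_add_mk, Prod.ext_iff]
  constructor
  · rintro (h | h | h | h) <;> simp_all <;> omega
  · rintro ⟨(rfl | rfl), (rfl | rfl)⟩ <;> simp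

lemma isc_f {i : ℕ} {p : ℤ × ℤ} : IsSquareCorner (f i) p ↔
    (if i = 0 then ((p.1 = 0 ∨ p.1 = 1) ∧ (p.2 = 1 ∨ p.2 = 2))
     else ((p.1 = (i : ℤ) - 1 ∨ p.1 = (i : ℤ)) ∧ (p.2 = 0 ∨ p.2 = 1))) := by
  by_cases h : i = 0 <;> simp [isc_iff, f, h] <;> omega

lemma mem_corners_iff {n : ℕ} {c : ℕ → ℤ × ℤ} {p : ℤ × ℤ} :
    p ∈ corners n c ↔ ∃ i < n, IsSquareCorner (c i) p := by
  simp only [corners, mem_biUnion, mem_range, mem_insert, mem_singleton, IsSquareCorner]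

lemma corners_f {n : ℕ} (hn : 2 ≤ n) : corners n f = Sfin n := by
  ext p
  rw [mem_corners_iff, mem_Sfin]
  constructor
  · rintro ⟨i, hi, h⟩
    rw [isc_f] at h
    by_cases h0 : i = 0 <;> simp [h0] at h <;> omega
  · rintro (⟨h0, h1, h2⟩ | ⟨h1, h2⟩)
    · refine ⟨max p.1.toNat 1, by omega, ?_⟩
      rw [isc_f, if_neg (by omega)]
      constructor
      · omega
      · omega
    · exact ⟨0, by omega, by rw [isc_f, if_pos rfl]; exact ⟨by omega, by omega⟩⟩

lemma adj_taxicab {n : ℕ} {c : ℕ → ℤ × ℤ} {u v : ℤ × ℤ} (h : (chainGraph n c).Adj u v) :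
    taxicab u v = 1 := by
  rw [chainGraph, SimpleGraph.fromRel_adj] at h
  rcases h.2 with h' | h'
  · exact h'.1
  · have := h'.1; unfold taxicab at *; omega

lemma adj_of_f {n : ℕ} {u v : ℤ × ℤ} (hn : 2 ≤ n) (hu : u ∈ Sfin n) (hv : v ∈ Sfin n)
    (h : taxicab u v = 1) : (chainGraph n f).Adj u v := by
  rw [chainGraph, SimpleGraph.fromRel_adj]
  rw [mem_Sfin] at hu hv
  refine ⟨?_, Or.inl ⟨h, ?_⟩⟩
  · rintro rfl; unfold taxicab at h; omega
  · by_cases h2 : u.2 = 2 ∨ v.2 = 2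
    · refine ⟨0, by omega, ?_, ?_⟩ <;> rw [isc_f, if_pos rfl] <;>
        unfold taxicab at h <;> omega
    · refine ⟨(min (min u.1 v.1 + 1) ((n : ℤ) - 1)).toNat, by omega, ?_, ?_⟩ <;>
        rw [isc_f, if_neg (by omega)] <;> unfold taxicab at h <;>
        constructor <;> omega

lemma taxi_step {u w v : ℤ × ℤ} (h : taxicab u w = 1) :
    taxicab u v ≤ taxicab w v + 1 ∧ (taxicab u v + taxicab w v) % 2 = 1 := by
  unfold taxicab at *; omega

lemma walk_le {n : ℕ} {c : ℕ → ℤ × ℤ} : ∀ {u v : ℤ × ℤ} (W : (chainGraph n c).Walk u v),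
    taxicab u v ≤ W.length ∧ (taxicab u v + W.length) % 2 = 0 := by
  intro u v W
  induction W with
  | nil => unfold taxicab; simp
  | @cons p q r h W ih =>
    have h1 := adj_taxicab h
    have h2 := taxi_step (v := r) h1
    simp only [SimpleGraph.Walk.length_cons]
    omega

lemma dist_two_iff {n : ℕ} {u v : ℤ × ℤ} (hn : 2 ≤ n) (hu : u ∈ Sfin n) (hv : v ∈ Sfin n) :
    (chainGraph n f).dist u v = 2 ↔ taxicab u v = 2 := by
  constructor
  · intro hd
    have hr : (chainGraph n f).Reachable u v := by
      apply SimpleGraph.Reachable.of_dist_ne_zero; omega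
    obtain ⟨W, hW⟩ := hr.exists_walk_length_eq_dist
    have := walk_le W
    rw [hW, hd] at this
    have hne : u ≠ v := by rintro rfl; rw [SimpleGraph.dist_self] at hd; omega
    have : taxicab u v ≠ 0 := fun h0 => hne (by
      obtain ⟨a,b⟩ := u; obtain ⟨x,y⟩ := v
      unfold taxicab at h0; simp only [Prod.mk.injEq]; constructor <;> omega)
    omega
  · intro ht
    -- midpoint
    rw [mem_Sfin] at hu hv
    obtain ⟨a, b⟩ := u
    obtain ⟨x, y⟩ := v
    simp only [Prod.fst, Prod.snd] at hu hv
    obtain ⟨w, hw, hw1, hw2⟩ : ∃ w, w ∈ Sfin n ∧ taxicab (a,b) w = 1 ∧ taxicab w (x,y) = 1 := by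
      by_cases hax : a = x
      · exact ⟨(a, min b y + 1), by rw [mem_Sfin]; simp [taxicab] at ht ⊢; omega, by simp [taxicab] at ht ⊢; omega, by simp [taxicab] at ht ⊢; omega⟩
      · by_cases hby : b = y
        · exact ⟨(min a x + 1, b), by rw [mem_Sfin]; simp [taxicab] at ht ⊢; omega, by simp [taxicab] at ht ⊢; omega, by simp [taxicab] at ht ⊢; omega⟩
        · by_cases hd : y = 2 ∧ 2 ≤ a
          · exact ⟨(x, b), by rw [mem_Sfin]; simp [taxicab] at ht ⊢; omega, by simp [taxicab] at ht ⊢; omega, by simp [taxicab] at ht ⊢; omega⟩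
          · exact ⟨(a, y), by rw [mem_Sfin]; simp [taxicab] at ht ⊢; omega, by simp [taxicab] at ht ⊢; omega, by simp [taxicab] at ht ⊢; omega⟩
    have hadj1 : (chainGraph n f).Adj (a,b) w := adj_of_f hn (by rw [mem_Sfin]; exact hu) hw hw1
    have hadj2 : (chainGraph n f).Adj w (x,y) := adj_of_f hn hw (by rw [mem_Sfin]; exact hv) hw2
    have hle : (chainGraph n f).dist (a,b) (x,y) ≤ 2 := by
      have := SimpleGraph.dist_le (SimpleGraph.Walk.cons hadj1 (SimpleGraph.Walk.cons hadj2 SimpleGraph.Walk.nil))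
      simpa using this
    have hge : 2 ≤ (chainGraph n f).dist (a,b) (x,y) := by
      have hr : (chainGraph n f).Reachable (a,b) (x,y) := ⟨SimpleGraph.Walk.cons hadj1 (SimpleGraph.Walk.cons hadj2 SimpleGraph.Walk.nil)⟩
      obtain ⟨W, hW⟩ := hr.exists_walk_length_eq_dist
      have := (walk_le W).1
      omega
    omega

lemma tau_f {n : ℕ} {v : ℤ × ℤ} (hn : 2 ≤ n) (hv : v ∈ Sfin n) : tau n f v = tS n v := by
  unfold tau tS
  rw [corners_f hn]
  congr 1
  apply Finset.filter_congr
  intro u hu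
  have := dist_two_iff hn hv hu
  simp [this]

lemma ZC1_f {n : ℕ} (hn : 2 ≤ n) : ZC1 n f = ∑ v ∈ Sfin n, tS n v ^ 2 := by
  unfold ZC1
  rw [corners_f hn]
  exact Finset.sum_congr rfl fun v hv => by rw [tau_f hn hv]

lemma ZC2_f {n : ℕ} (hn : 2 ≤ n) :
    ZC2 n f = (∑ u ∈ Sfin n, ∑ v ∈ Sfin n,
      if taxicab u v = 1 then tS n u * tS n v else 0) / 2 := by
  unfold ZC2
  rw [corners_f hn]
  congr 1
  refine Finset.sum_congr rfl fun u hu => Finset.sum_congr rfl fun v hv => ?_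
  rw [tau_f hn hu, tau_f hn hv]
  by_cases h : taxicab u v = 1
  · rw [if_pos h, if_pos (adj_of_f hn hu hv h)]
  · rw [if_neg h, if_neg (fun ha => h (adj_taxicab ha))]

lemma card2 {a b : ℤ × ℤ} (h : a ≠ b) : ({a, b} : Finset (ℤ × ℤ)).card = 2 := by
  rw [Finset.card_insert_of_notMem (by simpa using h), Finset.card_singleton]

lemma card3 {a b c : ℤ × ℤ} (h1 : a ≠ b) (h2 : a ≠ c) (h3 : b ≠ c) :
    ({a, b, c} : Finset (ℤ × ℤ)).card = 3 := by
  rw [Finset.card_insert_of_notMem (by simp [h1, h2]), card2 h3]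

lemma card4 {a b c d : ℤ × ℤ} (h1 : a ≠ b) (h2 : a ≠ c) (h3 : a ≠ d) (h4 : b ≠ c)
    (h5 : b ≠ d) (h6 : c ≠ d) : ({a, b, c, d} : Finset (ℤ × ℤ)).card = 4 := by
  rw [Finset.card_insert_of_notMem (by simp [h1, h2, h3]), card3 h4 h5 h6]

lemma card5 {a b c d e : ℤ × ℤ} (h1 : a ≠ b) (h2 : a ≠ c) (h3 : a ≠ d) (h4 : a ≠ e)
    (h5 : b ≠ c) (h6 : b ≠ d) (h7 : b ≠ e) (h8 : c ≠ d) (h9 : c ≠ e) (h10 : d ≠ e) :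
    ({a, b, c, d, e} : Finset (ℤ × ℤ)).card = 5 := by
  rw [Finset.card_insert_of_notMem (by simp [h1, h2, h3, h4]), card4 h5 h6 h7 h8 h9 h10]

lemma tS0 {n : ℕ} (hn : 7 ≤ n) (x : ℤ) (h0 : 0 ≤ x) (h1 : x ≤ (n:ℤ) - 1) :
    tS n (x, (0:ℤ)) = if x = 0 then 3 else if x = (n:ℤ) - 1 then 2
      else if x = (n:ℤ) - 2 then 3 else 4 := by
  have hn' : (7:ℤ) ≤ (n:ℤ) := by exact_mod_cast hn
  unfold tS
  by_cases e0 : x = 0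
  · rw [if_pos e0]
    have hset : (Sfin n).filter (fun u => taxicab (x, 0) u = 2) = {((2:ℤ), (0:ℤ)), ((1:ℤ), (1:ℤ)), ((0:ℤ), (2:ℤ))} := by
      ext u
      obtain ⟨a, b⟩ := u
      simp only [Finset.mem_filter]; simp only [mem_Sfin, Finset.mem_insert, Finset.mem_singleton,
        Prod.mk.injEq, taxicab]
      omega
    rw [hset]
    rw [card3 (by simp only [ne_eq, Prod.mk.injEq]; omega) (by simp only [ne_eq, Prod.mk.injEq]; omega) (by simp only [ne_eq, Prod.mk.injEq]; omega)]
  by_cases e1 : x = (n:ℤ) - 1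
  · rw [if_neg e0, if_pos e1]
    have hset : (Sfin n).filter (fun u => taxicab (x, 0) u = 2) = {(((n:ℤ)-3:ℤ), (0:ℤ)), (((n:ℤ)-2:ℤ), (1:ℤ))} := by
      ext u
      obtain ⟨a, b⟩ := u
      simp only [Finset.mem_filter]; simp only [mem_Sfin, Finset.mem_insert, Finset.mem_singleton,
        Prod.mk.injEq, taxicab]
      omega
    rw [hset]
    rw [card2 (by simp only [ne_eq, Prod.mk.injEq]; omega)]
  by_cases e2 : x = (n:ℤ) - 2
  · rw [if_neg e0, if_neg e1, if_pos e2]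
    have hset : (Sfin n).filter (fun u => taxicab (x, 0) u = 2) = {(((n:ℤ)-4:ℤ), (0:ℤ)), (((n:ℤ)-3:ℤ), (1:ℤ)), (((n:ℤ)-1:ℤ), (1:ℤ))} := by
      ext u
      obtain ⟨a, b⟩ := u
      simp only [Finset.mem_filter]; simp only [mem_Sfin, Finset.mem_insert, Finset.mem_singleton,
        Prod.mk.injEq, taxicab]
      omega
    rw [hset]
    rw [card3 (by simp only [ne_eq, Prod.mk.injEq]; omega) (by simp only [ne_eq, Prod.mk.injEq]; omega) (by simp only [ne_eq, Prod.mk.injEq]; omega)]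
  rw [if_neg e0, if_neg e1, if_neg e2]
  by_cases e3 : x = 1
  · have hset : (Sfin n).filter (fun u => taxicab (x, 0) u = 2) = {((3:ℤ), (0:ℤ)), ((0:ℤ), (1:ℤ)), ((2:ℤ), (1:ℤ)), ((1:ℤ), (2:ℤ))} := by
      ext u
      obtain ⟨a, b⟩ := u
      simp only [Finset.mem_filter]; simp only [mem_Sfin, Finset.mem_insert, Finset.mem_singleton,
        Prod.mk.injEq, taxicab]
      omega
    rw [hset]
    rw [card4 (by simp only [ne_eq, Prod.mk.injEq]; omega) (by simp only [ne_eq, Prod.mk.injEq]; omega) (by simp only [ne_eq, Prod.mk.injEq]; omega) (by simp only [ne_eq, Prod.mk.injEq]; omega) (by simp only [ne_eq, Prod.mk.injEq]; omega) (by simp only [ne_eq, Prod.mk.injEq]; omega)]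
  · have hset : (Sfin n).filter (fun u => taxicab (x, 0) u = 2) = {((x-2:ℤ), (0:ℤ)), ((x+2:ℤ), (0:ℤ)), ((x-1:ℤ), (1:ℤ)), ((x+1:ℤ), (1:ℤ))} := by
      ext u
      obtain ⟨a, b⟩ := u
      simp only [Finset.mem_filter]; simp only [mem_Sfin, Finset.mem_insert, Finset.mem_singleton,
        Prod.mk.injEq, taxicab]
      omega
    rw [hset]
    rw [card4 (by simp only [ne_eq, Prod.mk.injEq]; omega) (by simp only [ne_eq, Prod.mk.injEq]; omega) (by simp only [ne_eq, Prod.mk.injEq]; omega) (by simp only [ne_eq, Prod.mk.injEq]; omega) (by simp only [ne_eq, Prod.mk.injEq]; omega) (by simp only [ne_eq, Prod.mk.injEq]; omega)]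

lemma tS1 {n : ℕ} (hn : 7 ≤ n) (x : ℤ) (h0 : 0 ≤ x) (h1 : x ≤ (n:ℤ) - 1) :
    tS n (x, (1:ℤ)) = if x = 2 then 5 else if x = 0 then 3 else if x = (n:ℤ) - 1 then 2
      else if x = (n:ℤ) - 2 then 3 else 4 := by
  have hn' : (7:ℤ) ≤ (n:ℤ) := by exact_mod_cast hn
  unfold tS
  by_cases e0 : x = 2
  · rw [if_pos e0]
    have hset : (Sfin n).filter (fun u => taxicab (x, 1) u = 2) = {((0:ℤ), (1:ℤ)), ((4:ℤ), (1:ℤ)), ((1:ℤ), (0:ℤ)), ((3:ℤ), (0:ℤ)), ((1:ℤ), (2:ℤ))} := by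
      ext u
      obtain ⟨a, b⟩ := u
      simp only [Finset.mem_filter]; simp only [mem_Sfin, Finset.mem_insert, Finset.mem_singleton,
        Prod.mk.injEq, taxicab]
      omega
    rw [hset]
    rw [card5 (by simp only [ne_eq, Prod.mk.injEq]; omega) (by simp only [ne_eq, Prod.mk.injEq]; omega) (by simp only [ne_eq, Prod.mk.injEq]; omega) (by simp only [ne_eq, Prod.mk.injEq]; omega) (by simp only [ne_eq, Prod.mk.injEq]; omega) (by simp only [ne_eq, Prod.mk.injEq]; omega) (by simp only [ne_eq, Prod.mk.injEq]; omega) (by simp only [ne_eq, Prod.mk.injEq]; omega) (by simp only [ne_eq, Prod.mk.injEq]; omega) (by simp only [ne_eq, Prod.mk.injEq]; omega)]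
  by_cases e1 : x = 0
  · rw [if_neg e0, if_pos e1]
    have hset : (Sfin n).filter (fun u => taxicab (x, 1) u = 2) = {((2:ℤ), (1:ℤ)), ((1:ℤ), (0:ℤ)), ((1:ℤ), (2:ℤ))} := by
      ext u
      obtain ⟨a, b⟩ := u
      simp only [Finset.mem_filter]; simp only [mem_Sfin, Finset.mem_insert, Finset.mem_singleton,
        Prod.mk.injEq, taxicab]
      omega
    rw [hset]
    rw [card3 (by simp only [ne_eq, Prod.mk.injEq]; omega) (by simp only [ne_eq, Prod.mk.injEq]; omega) (by simp only [ne_eq, Prod.mk.injEq]; omega)]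
  by_cases e2 : x = (n:ℤ) - 1
  · rw [if_neg e0, if_neg e1, if_pos e2]
    have hset : (Sfin n).filter (fun u => taxicab (x, 1) u = 2) = {(((n:ℤ)-3:ℤ), (1:ℤ)), (((n:ℤ)-2:ℤ), (0:ℤ))} := by
      ext u
      obtain ⟨a, b⟩ := u
      simp only [Finset.mem_filter]; simp only [mem_Sfin, Finset.mem_insert, Finset.mem_singleton,
        Prod.mk.injEq, taxicab]
      omega
    rw [hset]
    rw [card2 (by simp only [ne_eq, Prod.mk.injEq]; omega)]
  by_cases e3 : x = (n:ℤ) - 2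
  · rw [if_neg e0, if_neg e1, if_neg e2, if_pos e3]
    have hset : (Sfin n).filter (fun u => taxicab (x, 1) u = 2) = {(((n:ℤ)-4:ℤ), (1:ℤ)), (((n:ℤ)-3:ℤ), (0:ℤ)), (((n:ℤ)-1:ℤ), (0:ℤ))} := by
      ext u
      obtain ⟨a, b⟩ := u
      simp only [Finset.mem_filter]; simp only [mem_Sfin, Finset.mem_insert, Finset.mem_singleton,
        Prod.mk.injEq, taxicab]
      omega
    rw [hset]
    rw [card3 (by simp only [ne_eq, Prod.mk.injEq]; omega) (by simp only [ne_eq, Prod.mk.injEq]; omega) (by simp only [ne_eq, Prod.mk.injEq]; omega)]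
  rw [if_neg e0, if_neg e1, if_neg e2, if_neg e3]
  by_cases e4 : x = 1
  · have hset : (Sfin n).filter (fun u => taxicab (x, 1) u = 2) = {((3:ℤ), (1:ℤ)), ((0:ℤ), (0:ℤ)), ((2:ℤ), (0:ℤ)), ((0:ℤ), (2:ℤ))} := by
      ext u
      obtain ⟨a, b⟩ := u
      simp only [Finset.mem_filter]; simp only [mem_Sfin, Finset.mem_insert, Finset.mem_singleton,
        Prod.mk.injEq, taxicab]
      omega
    rw [hset]
    rw [card4 (by simp only [ne_eq, Prod.mk.injEq]; omega) (by simp only [ne_eq, Prod.mk.injEq]; omega) (by simp only [ne_eq, Prod.mk.injEq]; omega) (by simp only [ne_eq, Prod.mk.injEq]; omega) (by simp only [ne_eq, Prod.mk.injEq]; omega) (by simp only [ne_eq, Prod.mk.injEq]; omega)]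
  · have hset : (Sfin n).filter (fun u => taxicab (x, 1) u = 2) = {((x-2:ℤ), (1:ℤ)), ((x+2:ℤ), (1:ℤ)), ((x-1:ℤ), (0:ℤ)), ((x+1:ℤ), (0:ℤ))} := by
      ext u
      obtain ⟨a, b⟩ := u
      simp only [Finset.mem_filter]; simp only [mem_Sfin, Finset.mem_insert, Finset.mem_singleton,
        Prod.mk.injEq, taxicab]
      omega
    rw [hset]
    rw [card4 (by simp only [ne_eq, Prod.mk.injEq]; omega) (by simp only [ne_eq, Prod.mk.injEq]; omega) (by simp only [ne_eq, Prod.mk.injEq]; omega) (by simp only [ne_eq, Prod.mk.injEq]; omega) (by simp only [ne_eq, Prod.mk.injEq]; omega) (by simp only [ne_eq, Prod.mk.injEq]; omega)]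

lemma tS02 {n : ℕ} (hn : 7 ≤ n) : tS n ((0:ℤ), (2:ℤ)) = 2 := by
  have hn' : (7:ℤ) ≤ (n:ℤ) := by exact_mod_cast hn
  unfold tS
  have hset : (Sfin n).filter (fun u => taxicab ((0:ℤ), (2:ℤ)) u = 2) = {((0:ℤ), (0:ℤ)), ((1:ℤ), (1:ℤ))} := by
    ext u
    obtain ⟨a, b⟩ := u
    simp only [Finset.mem_filter]; simp only [mem_Sfin, Finset.mem_insert, Finset.mem_singleton,
      Prod.mk.injEq, taxicab]
    omega
  rw [hset]
  rw [card2 (by simp only [ne_eq, Prod.mk.injEq]; omega)]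

lemma tS12 {n : ℕ} (hn : 7 ≤ n) : tS n ((1:ℤ), (2:ℤ)) = 3 := by
  have hn' : (7:ℤ) ≤ (n:ℤ) := by exact_mod_cast hn
  unfold tS
  have hset : (Sfin n).filter (fun u => taxicab ((1:ℤ), (2:ℤ)) u = 2) = {((1:ℤ), (0:ℤ)), ((0:ℤ), (1:ℤ)), ((2:ℤ), (1:ℤ))} := by
    ext u
    obtain ⟨a, b⟩ := u
    simp only [Finset.mem_filter]; simp only [mem_Sfin, Finset.mem_insert, Finset.mem_singleton,
      Prod.mk.injEq, taxicab]
    omega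
  rw [hset]
  rw [card3 (by simp only [ne_eq, Prod.mk.injEq]; omega) (by simp only [ne_eq, Prod.mk.injEq]; omega) (by simp only [ne_eq, Prod.mk.injEq]; omega)]

lemma tS0_eq {n : ℕ} (hn : 7 ≤ n) (x : ℤ) (h0 : 0 ≤ x) (h1 : x ≤ (n:ℤ) - 1) (k : ℕ)
    (hk : (x = 0 ∧ k = 3) ∨ (x = (n:ℤ) - 1 ∧ k = 2) ∨ (x = (n:ℤ) - 2 ∧ k = 3) ∨
      ((1 ≤ x ∧ x ≤ (n:ℤ) - 3) ∧ k = 4)) : tS n (x, (0:ℤ)) = k := by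
  have hn' : (7:ℤ) ≤ (n:ℤ) := by exact_mod_cast hn
  rw [tS0 hn x h0 h1]; split_ifs <;> omega

lemma tS1_eq {n : ℕ} (hn : 7 ≤ n) (x : ℤ) (h0 : 0 ≤ x) (h1 : x ≤ (n:ℤ) - 1) (k : ℕ)
    (hk : (x = 2 ∧ k = 5) ∨ (x = 0 ∧ k = 3) ∨ (x = (n:ℤ) - 1 ∧ k = 2) ∨
      (x = (n:ℤ) - 2 ∧ k = 3) ∨ ((1 ≤ x ∧ x ≤ (n:ℤ) - 3 ∧ ¬ x = 2) ∧ k = 4)) :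
    tS n (x, (1:ℤ)) = k := by
  have hn' : (7:ℤ) ≤ (n:ℤ) := by exact_mod_cast hn
  rw [tS1 hn x h0 h1]; split_ifs <;> omega

def inS (n : ℕ) (u : ℤ × ℤ) : ℕ := ∑ v ∈ Sfin n, if taxicab u v = 1 then tS n v else 0

lemma inS0 {n : ℕ} (hn : 7 ≤ n) (x : ℤ) (h0 : 0 ≤ x) (h1 : x ≤ (n:ℤ) - 1) :
    inS n (x, (0:ℤ)) = if x = 0 then 7 else if x = 1 then 11 else if x = 2 then 13
      else if x = (n:ℤ) - 1 then 5 else if x = (n:ℤ) - 2 then 9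
      else if x = (n:ℤ) - 3 then 11 else 12 := by
  have hn' : (7:ℤ) ≤ (n:ℤ) := by exact_mod_cast hn
  unfold inS
  rw [← Finset.sum_filter]
  by_cases e0 : x = 0
  · have hset : (Sfin n).filter (fun v => taxicab (x, 0) v = 1) = {((1:ℤ), (0:ℤ)), ((0:ℤ), (1:ℤ))} := by
      ext u
      obtain ⟨a, b⟩ := u
      simp only [Finset.mem_filter]; simp only [mem_Sfin, Finset.mem_insert, Finset.mem_singleton,
        Prod.mk.injEq, taxicab]
      omega
    rw [hset]
    rw [Finset.sum_insert (by simp only [Finset.mem_insert, Finset.mem_singleton, Prod.mk.injEq]; omega), Finset.sum_singleton, tS0_eq hn (1) (by omega) (by omega) 4 (by omega), tS1_eq hn (0) (by omega) (by omega) 3 (by omega)]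
    split_ifs <;> omega
  by_cases e1 : x = 1
  · have hset : (Sfin n).filter (fun v => taxicab (x, 0) v = 1) = {((0:ℤ), (0:ℤ)), ((2:ℤ), (0:ℤ)), ((1:ℤ), (1:ℤ))} := by
      ext u
      obtain ⟨a, b⟩ := u
      simp only [Finset.mem_filter]; simp only [mem_Sfin, Finset.mem_insert, Finset.mem_singleton,
        Prod.mk.injEq, taxicab]
      omega
    rw [hset]
    rw [Finset.sum_insert (by simp only [Finset.mem_insert, Finset.mem_singleton, Prod.mk.injEq]; omega), Finset.sum_insert (by simp only [Finset.mem_insert, Finset.mem_singleton, Prod.mk.injEq]; omega), Finset.sum_singleton, tS0_eq hn (0) (by omega) (by omega) 3 (by omega), tS0_eq hn (2) (by omega) (by omega) 4 (by omega), tS1_eq hn (1) (by omega) (by omega) 4 (by omega)]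
    split_ifs <;> omega
  by_cases e2 : x = (n:ℤ) - 1
  · have hset : (Sfin n).filter (fun v => taxicab (x, 0) v = 1) = {(((n:ℤ)-2:ℤ), (0:ℤ)), (((n:ℤ)-1:ℤ), (1:ℤ))} := by
      ext u
      obtain ⟨a, b⟩ := u
      simp only [Finset.mem_filter]; simp only [mem_Sfin, Finset.mem_insert, Finset.mem_singleton,
        Prod.mk.injEq, taxicab]
      omega
    rw [hset]
    rw [Finset.sum_insert (by simp only [Finset.mem_insert, Finset.mem_singleton, Prod.mk.injEq]; omega), Finset.sum_singleton, tS0_eq hn ((n:ℤ)-2) (by omega) (by omega) 3 (by omega), tS1_eq hn ((n:ℤ)-1) (by omega) (by omega) 2 (by omega)]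
    split_ifs <;> omega
  · have hset : (Sfin n).filter (fun v => taxicab (x, 0) v = 1) = {((x-1:ℤ), (0:ℤ)), ((x+1:ℤ), (0:ℤ)), ((x:ℤ), (1:ℤ))} := by
      ext u
      obtain ⟨a, b⟩ := u
      simp only [Finset.mem_filter]; simp only [mem_Sfin, Finset.mem_insert, Finset.mem_singleton,
        Prod.mk.injEq, taxicab]
      omega
    rw [hset]
    by_cases m0 : x = 2
    · rw [Finset.sum_insert (by simp only [Finset.mem_insert, Finset.mem_singleton, Prod.mk.injEq]; omega), Finset.sum_insert (by simp only [Finset.mem_insert, Finset.mem_singleton, Prod.mk.injEq]; omega), Finset.sum_singleton, tS0_eq hn (x-1) (by omega) (by omega) 4 (by omega), tS0_eq hn (x+1) (by omega) (by omega) 4 (by omega), tS1_eq hn (x) (by omega) (by omega) 5 (by omega)]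
      split_ifs <;> omega
    by_cases m1 : x = (n:ℤ) - 2
    · rw [Finset.sum_insert (by simp only [Finset.mem_insert, Finset.mem_singleton, Prod.mk.injEq]; omega), Finset.sum_insert (by simp only [Finset.mem_insert, Finset.mem_singleton, Prod.mk.injEq]; omega), Finset.sum_singleton, tS0_eq hn (x-1) (by omega) (by omega) 4 (by omega), tS0_eq hn (x+1) (by omega) (by omega) 2 (by omega), tS1_eq hn (x) (by omega) (by omega) 3 (by omega)]
      split_ifs <;> omega
    by_cases m2 : x = (n:ℤ) - 3
    · rw [Finset.sum_insert (by simp only [Finset.mem_insert, Finset.mem_singleton, Prod.mk.injEq]; omega), Finset.sum_insert (by simp only [Finset.mem_insert, Finset.mem_singleton, Prod.mk.injEq]; omega), Finset.sum_singleton, tS0_eq hn (x-1) (by omega) (by omega) 4 (by omega), tS0_eq hn (x+1) (by omega) (by omega) 3 (by omega), tS1_eq hn (x) (by omega) (by omega) 4 (by omega)]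
      split_ifs <;> omega
    rw [Finset.sum_insert (by simp only [Finset.mem_insert, Finset.mem_singleton, Prod.mk.injEq]; omega), Finset.sum_insert (by simp only [Finset.mem_insert, Finset.mem_singleton, Prod.mk.injEq]; omega), Finset.sum_singleton, tS0_eq hn (x-1) (by omega) (by omega) 4 (by omega), tS0_eq hn (x+1) (by omega) (by omega) 4 (by omega), tS1_eq hn (x) (by omega) (by omega) 4 (by omega)]
    split_ifs <;> omega

lemma inS1 {n : ℕ} (hn : 7 ≤ n) (x : ℤ) (h0 : 0 ≤ x) (h1 : x ≤ (n:ℤ) - 1) :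
    inS n (x, (1:ℤ)) = if x = 0 then 9 else if x = 1 then 15 else if x = 2 then 12
      else if x = 3 then 13 else if x = (n:ℤ) - 1 then 5 else if x = (n:ℤ) - 2 then 9
      else if x = (n:ℤ) - 3 then 11 else 12 := by
  have hn' : (7:ℤ) ≤ (n:ℤ) := by exact_mod_cast hn
  unfold inS
  rw [← Finset.sum_filter]
  by_cases e0 : x = 0
  · have hset : (Sfin n).filter (fun v => taxicab (x, 1) v = 1) = {((1:ℤ), (1:ℤ)), ((0:ℤ), (0:ℤ)), ((0:ℤ), (2:ℤ))} := by
      ext u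
      obtain ⟨a, b⟩ := u
      simp only [Finset.mem_filter]; simp only [mem_Sfin, Finset.mem_insert, Finset.mem_singleton,
        Prod.mk.injEq, taxicab]
      omega
    rw [hset]
    rw [Finset.sum_insert (by simp only [Finset.mem_insert, Finset.mem_singleton, Prod.mk.injEq]; omega), Finset.sum_insert (by simp only [Finset.mem_insert, Finset.mem_singleton, Prod.mk.injEq]; omega), Finset.sum_singleton, tS1_eq hn (1) (by omega) (by omega) 4 (by omega), tS0_eq hn (0) (by omega) (by omega) 3 (by omega), tS02 hn]
    split_ifs <;> omega
  by_cases e1 : x = 1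
  · have hset : (Sfin n).filter (fun v => taxicab (x, 1) v = 1) = {((0:ℤ), (1:ℤ)), ((2:ℤ), (1:ℤ)), ((1:ℤ), (0:ℤ)), ((1:ℤ), (2:ℤ))} := by
      ext u
      obtain ⟨a, b⟩ := u
      simp only [Finset.mem_filter]; simp only [mem_Sfin, Finset.mem_insert, Finset.mem_singleton,
        Prod.mk.injEq, taxicab]
      omega
    rw [hset]
    rw [Finset.sum_insert (by simp only [Finset.mem_insert, Finset.mem_singleton, Prod.mk.injEq]; omega), Finset.sum_insert (by simp only [Finset.mem_insert, Finset.mem_singleton, Prod.mk.injEq]; omega), Finset.sum_insert (by simp only [Finset.mem_insert, Finset.mem_singleton, Prod.mk.injEq]; omega), Finset.sum_singleton, tS1_eq hn (0) (by omega) (by omega) 3 (by omega), tS1_eq hn (2) (by omega) (by omega) 5 (by omega), tS0_eq hn (1) (by omega) (by omega) 4 (by omega), tS12 hn]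
    split_ifs <;> omega
  by_cases e2 : x = (n:ℤ) - 1
  · have hset : (Sfin n).filter (fun v => taxicab (x, 1) v = 1) = {(((n:ℤ)-2:ℤ), (1:ℤ)), (((n:ℤ)-1:ℤ), (0:ℤ))} := by
      ext u
      obtain ⟨a, b⟩ := u
      simp only [Finset.mem_filter]; simp only [mem_Sfin, Finset.mem_insert, Finset.mem_singleton,
        Prod.mk.injEq, taxicab]
      omega
    rw [hset]
    rw [Finset.sum_insert (by simp only [Finset.mem_insert, Finset.mem_singleton, Prod.mk.injEq]; omega), Finset.sum_singleton, tS1_eq hn ((n:ℤ)-2) (by omega) (by omega) 3 (by omega), tS0_eq hn ((n:ℤ)-1) (by omega) (by omega) 2 (by omega)]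
    split_ifs <;> omega
  · have hset : (Sfin n).filter (fun v => taxicab (x, 1) v = 1) = {((x-1:ℤ), (1:ℤ)), ((x+1:ℤ), (1:ℤ)), ((x:ℤ), (0:ℤ))} := by
      ext u
      obtain ⟨a, b⟩ := u
      simp only [Finset.mem_filter]; simp only [mem_Sfin, Finset.mem_insert, Finset.mem_singleton,
        Prod.mk.injEq, taxicab]
      omega
    rw [hset]
    by_cases m0 : x = 2
    · rw [Finset.sum_insert (by simp only [Finset.mem_insert, Finset.mem_singleton, Prod.mk.injEq]; omega), Finset.sum_insert (by simp only [Finset.mem_insert, Finset.mem_singleton, Prod.mk.injEq]; omega), Finset.sum_singleton, tS1_eq hn (x-1) (by omega) (by omega) 4 (by omega), tS1_eq hn (x+1) (by omega) (by omega) 4 (by omega), tS0_eq hn (x) (by omega) (by omega) 4 (by omega)]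
      split_ifs <;> omega
    by_cases m1 : x = 3
    · rw [Finset.sum_insert (by simp only [Finset.mem_insert, Finset.mem_singleton, Prod.mk.injEq]; omega), Finset.sum_insert (by simp only [Finset.mem_insert, Finset.mem_singleton, Prod.mk.injEq]; omega), Finset.sum_singleton, tS1_eq hn (x-1) (by omega) (by omega) 5 (by omega), tS1_eq hn (x+1) (by omega) (by omega) 4 (by omega), tS0_eq hn (x) (by omega) (by omega) 4 (by omega)]
      split_ifs <;> omega
    by_cases m2 : x = (n:ℤ) - 2
    · rw [Finset.sum_insert (by simp only [Finset.mem_insert, Finset.mem_singleton, Prod.mk.injEq]; omega), Finset.sum_insert (by simp only [Finset.mem_insert, Finset.mem_singleton, Prod.mk.injEq]; omega), Finset.sum_singleton, tS1_eq hn (x-1) (by omega) (by omega) 4 (by omega), tS1_eq hn (x+1) (by omega) (by omega) 2 (by omega), tS0_eq hn (x) (by omega) (by omega) 3 (by omega)]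
      split_ifs <;> omega
    by_cases m3 : x = (n:ℤ) - 3
    · rw [Finset.sum_insert (by simp only [Finset.mem_insert, Finset.mem_singleton, Prod.mk.injEq]; omega), Finset.sum_insert (by simp only [Finset.mem_insert, Finset.mem_singleton, Prod.mk.injEq]; omega), Finset.sum_singleton, tS1_eq hn (x-1) (by omega) (by omega) 4 (by omega), tS1_eq hn (x+1) (by omega) (by omega) 3 (by omega), tS0_eq hn (x) (by omega) (by omega) 4 (by omega)]
      split_ifs <;> omega
    rw [Finset.sum_insert (by simp only [Finset.mem_insert, Finset.mem_singleton, Prod.mk.injEq]; omega), Finset.sum_insert (by simp only [Finset.mem_insert, Finset.mem_singleton, Prod.mk.injEq]; omega), Finset.sum_singleton, tS1_eq hn (x-1) (by omega) (by omega) 4 (by omega), tS1_eq hn (x+1) (by omega) (by omega) 4 (by omega), tS0_eq hn (x) (by omega) (by omega) 4 (by omega)]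
    split_ifs <;> omega

lemma inS02 {n : ℕ} (hn : 7 ≤ n) : inS n ((0:ℤ), (2:ℤ)) = 6 := by
  have hn' : (7:ℤ) ≤ (n:ℤ) := by exact_mod_cast hn
  unfold inS
  rw [← Finset.sum_filter]
  have hset : (Sfin n).filter (fun v => taxicab ((0:ℤ), (2:ℤ)) v = 1) = {((1:ℤ), (2:ℤ)), ((0:ℤ), (1:ℤ))} := by
    ext u
    obtain ⟨a, b⟩ := u
    simp only [Finset.mem_filter]; simp only [mem_Sfin, Finset.mem_insert, Finset.mem_singleton,
      Prod.mk.injEq, taxicab]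
    omega
  rw [hset]
  rw [Finset.sum_insert (by simp only [Finset.mem_insert, Finset.mem_singleton, Prod.mk.injEq]; omega), Finset.sum_singleton, tS12 hn, tS1_eq hn (0) (by omega) (by omega) 3 (by omega)]

lemma inS12 {n : ℕ} (hn : 7 ≤ n) : inS n ((1:ℤ), (2:ℤ)) = 6 := by
  have hn' : (7:ℤ) ≤ (n:ℤ) := by exact_mod_cast hn
  unfold inS
  rw [← Finset.sum_filter]
  have hset : (Sfin n).filter (fun v => taxicab ((1:ℤ), (2:ℤ)) v = 1) = {((0:ℤ), (2:ℤ)), ((1:ℤ), (1:ℤ))} := by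
    ext u
    obtain ⟨a, b⟩ := u
    simp only [Finset.mem_filter]; simp only [mem_Sfin, Finset.mem_insert, Finset.mem_singleton,
      Prod.mk.injEq, taxicab]
    omega
  rw [hset]
  rw [Finset.sum_insert (by simp only [Finset.mem_insert, Finset.mem_singleton, Prod.mk.injEq]; omega), Finset.sum_singleton, tS02 hn, tS1_eq hn (1) (by omega) (by omega) 4 (by omega)]

lemma inS0_eq {n : ℕ} (hn : 7 ≤ n) (x : ℤ) (h0 : 0 ≤ x) (h1 : x ≤ (n:ℤ) - 1) (k : ℕ)
    (hk : (x = 0 ∧ k = 7) ∨ (x = 1 ∧ k = 11) ∨ (x = 2 ∧ k = 13) ∨ (x = (n:ℤ) - 1 ∧ k = 5) ∨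
      (x = (n:ℤ) - 2 ∧ k = 9) ∨ (x = (n:ℤ) - 3 ∧ k = 11) ∨
      ((3 ≤ x ∧ x ≤ (n:ℤ) - 4) ∧ k = 12)) : inS n (x, (0:ℤ)) = k := by
  have hn' : (7:ℤ) ≤ (n:ℤ) := by exact_mod_cast hn
  rw [inS0 hn x h0 h1]; split_ifs <;> omega

lemma inS1_eq {n : ℕ} (hn : 7 ≤ n) (x : ℤ) (h0 : 0 ≤ x) (h1 : x ≤ (n:ℤ) - 1) (k : ℕ)
    (hk : (x = 0 ∧ k = 9) ∨ (x = 1 ∧ k = 15) ∨ (x = 2 ∧ k = 12) ∨ (x = 3 ∧ k = 13) ∨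
      (x = (n:ℤ) - 1 ∧ k = 5) ∨ (x = (n:ℤ) - 2 ∧ k = 9) ∨ (x = (n:ℤ) - 3 ∧ k = 11) ∨
      ((4 ≤ x ∧ x ≤ (n:ℤ) - 4) ∧ k = 12)) : inS n (x, (1:ℤ)) = k := by
  have hn' : (7:ℤ) ≤ (n:ℤ) := by exact_mod_cast hn
  rw [inS1 hn x h0 h1]; split_ifs <;> omega

lemma sum_Sfin {n : ℕ} (g : ℤ × ℤ → ℤ) :
    ∑ v ∈ Sfin n, g v = (∑ x ∈ Finset.range n, (g ((x:ℤ), 0) + g ((x:ℤ), 1)))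
      + g (0, 2) + g (1, 2) := by
  have i1 : ∀ x ∈ Finset.range n, ∀ y ∈ Finset.range n,
      ((x:ℤ), (0:ℤ)) = ((y:ℤ), (0:ℤ)) → x = y := by
    intro a _ b _ h
    simp only [Prod.mk.injEq] at h
    exact_mod_cast h.1
  have i2 : ∀ x ∈ Finset.range n, ∀ y ∈ Finset.range n,
      ((x:ℤ), (1:ℤ)) = ((y:ℤ), (1:ℤ)) → x = y := by
    intro a _ b _ h
    simp only [Prod.mk.injEq] at h
    exact_mod_cast h.1
  have d1 : Disjoint ((Finset.range n).image fun x : ℕ => ((x : ℤ), (0:ℤ)))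
      ((Finset.range n).image fun x : ℕ => ((x : ℤ), (1:ℤ))) := by
    rw [Finset.disjoint_left]
    rintro ⟨a, b⟩ ha hb
    simp only [Finset.mem_image, Prod.mk.injEq] at ha hb
    obtain ⟨_, _, _, h0⟩ := ha
    obtain ⟨_, _, _, h1⟩ := hb
    omega
  have d2 : Disjoint (((Finset.range n).image fun x : ℕ => ((x : ℤ), (0:ℤ))) ∪
      ((Finset.range n).image fun x : ℕ => ((x : ℤ), (1:ℤ))))
      ({((0:ℤ), (2:ℤ)), ((1:ℤ), (2:ℤ))} : Finset (ℤ × ℤ)) := by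
    rw [Finset.disjoint_left]
    rintro ⟨a, b⟩ ha hb
    simp only [Finset.mem_union, Finset.mem_image, Finset.mem_insert, Finset.mem_singleton,
      Prod.mk.injEq] at ha hb
    rcases ha with ⟨_, _, _, h0⟩ | ⟨_, _, _, h1⟩ <;> omega
  unfold Sfin
  rw [Finset.sum_union d2, Finset.sum_union d1, Finset.sum_image i1, Finset.sum_image i2,
    Finset.sum_pair (by decide), ← Finset.sum_add_distrib]
  ring

set_option maxHeartbeats 2000000 in
lemma ZC1_big {n : ℕ} (hn : 7 ≤ n) : (ZC1 n f : ℤ) = 32 * n - 30 := by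
  have hn' : (7:ℤ) ≤ (n:ℤ) := by exact_mod_cast hn
  rw [ZC1_f (by omega)]
  push_cast
  rw [sum_Sfin (fun v => (tS n v : ℤ)^2)]
  have key : ∀ x ∈ Finset.range n, ((tS n ((x:ℤ), 0) : ℤ)^2 + (tS n ((x:ℤ), 1) : ℤ)^2)
      = 32 + ((if x = 0 then (-14 : ℤ) else 0) + (if x = 2 then 9 else 0)
        + (if x = n - 2 then -14 else 0) + (if x = n - 1 then -24 else 0)) := by
    intro x hx
    simp only [Finset.mem_range] at hx
    rw [tS0 hn (x:ℤ) (by omega) (by omega), tS1 hn (x:ℤ) (by omega) (by omega)]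
    split_ifs <;> first | (exfalso; omega) | norm_num | omega
  rw [Finset.sum_congr rfl key]
  rw [Finset.sum_add_distrib, Finset.sum_const, Finset.card_range,
    Finset.sum_add_distrib, Finset.sum_add_distrib, Finset.sum_add_distrib,
    Finset.sum_ite_eq' (Finset.range n) 0 (fun _ => (-14:ℤ)),
    Finset.sum_ite_eq' (Finset.range n) 2 (fun _ => (9:ℤ)),
    Finset.sum_ite_eq' (Finset.range n) (n-2) (fun _ => (-14:ℤ)),
    Finset.sum_ite_eq' (Finset.range n) (n-1) (fun _ => (-24:ℤ)),
    if_pos (by simp only [Finset.mem_range]; omega),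
    if_pos (by simp only [Finset.mem_range]; omega),
    if_pos (by simp only [Finset.mem_range]; omega),
    if_pos (by simp only [Finset.mem_range]; omega),
    tS02 hn, tS12 hn]
  push_cast
  rw [nsmul_eq_mul]
  push_cast
  ring

set_option maxHeartbeats 2000000 in
lemma ZC2_double {n : ℕ} (hn : 7 ≤ n) :
    ((∑ u ∈ Sfin n, ∑ v ∈ Sfin n, if taxicab u v = 1 then tS n u * tS n v else 0 : ℕ) : ℤ)
      = 96 * n - 116 := by
  have hn' : (7:ℤ) ≤ (n:ℤ) := by exact_mod_cast hn
  have inner : ∀ u, (∑ v ∈ Sfin n, if taxicab u v = 1 then tS n u * tS n v else 0)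
      = tS n u * inS n u := by
    intro u
    unfold inS
    rw [Finset.mul_sum]
    exact Finset.sum_congr rfl fun v _ => by rw [mul_ite, mul_zero]
  rw [Finset.sum_congr rfl fun u _ => inner u]
  push_cast
  rw [sum_Sfin (fun v => (tS n v : ℤ) * (inS n v : ℤ))]
  have key : ∀ x ∈ Finset.range n,
      ((tS n ((x:ℤ), 0) : ℤ) * (inS n ((x:ℤ), 0) : ℤ)
        + (tS n ((x:ℤ), 1) : ℤ) * (inS n ((x:ℤ), 1) : ℤ))
      = 96 + ((if x = 0 then (-48 : ℤ) else 0) + (if x = 1 then 8 else 0)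
        + (if x = 2 then 16 else 0) + (if x = 3 then 4 else 0)
        + (if x = n - 3 then -8 else 0) + (if x = n - 2 then -42 else 0)
        + (if x = n - 1 then -76 else 0)) := by
    intro x hx
    simp only [Finset.mem_range] at hx
    by_cases c0 : x = 0
    · rw [tS0_eq hn (x:ℤ) (by omega) (by omega) 3 (by omega),
        tS1_eq hn (x:ℤ) (by omega) (by omega) 3 (by omega),
        inS0_eq hn (x:ℤ) (by omega) (by omega) 7 (by omega),
        inS1_eq hn (x:ℤ) (by omega) (by omega) 9 (by omega)]
      split_ifs <;> omega
    by_cases c1 : x = 1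
    · rw [tS0_eq hn (x:ℤ) (by omega) (by omega) 4 (by omega),
        tS1_eq hn (x:ℤ) (by omega) (by omega) 4 (by omega),
        inS0_eq hn (x:ℤ) (by omega) (by omega) 11 (by omega),
        inS1_eq hn (x:ℤ) (by omega) (by omega) 15 (by omega)]
      split_ifs <;> omega
    by_cases c2 : x = 2
    · rw [tS0_eq hn (x:ℤ) (by omega) (by omega) 4 (by omega),
        tS1_eq hn (x:ℤ) (by omega) (by omega) 5 (by omega),
        inS0_eq hn (x:ℤ) (by omega) (by omega) 13 (by omega),
        inS1_eq hn (x:ℤ) (by omega) (by omega) 12 (by omega)]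
      split_ifs <;> omega
    by_cases c3 : x = 3
    · rw [tS0_eq hn (x:ℤ) (by omega) (by omega) 4 (by omega),
        tS1_eq hn (x:ℤ) (by omega) (by omega) 4 (by omega),
        inS0_eq hn (x:ℤ) (by omega) (by omega) 12 (by omega),
        inS1_eq hn (x:ℤ) (by omega) (by omega) 13 (by omega)]
      split_ifs <;> omega
    by_cases cn1 : x = n - 1
    · rw [tS0_eq hn (x:ℤ) (by omega) (by omega) 2 (by omega),
        tS1_eq hn (x:ℤ) (by omega) (by omega) 2 (by omega),
        inS0_eq hn (x:ℤ) (by omega) (by omega) 5 (by omega),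
        inS1_eq hn (x:ℤ) (by omega) (by omega) 5 (by omega)]
      split_ifs <;> omega
    by_cases cn2 : x = n - 2
    · rw [tS0_eq hn (x:ℤ) (by omega) (by omega) 3 (by omega),
        tS1_eq hn (x:ℤ) (by omega) (by omega) 3 (by omega),
        inS0_eq hn (x:ℤ) (by omega) (by omega) 9 (by omega),
        inS1_eq hn (x:ℤ) (by omega) (by omega) 9 (by omega)]
      split_ifs <;> omega
    by_cases cn3 : x = n - 3
    · rw [tS0_eq hn (x:ℤ) (by omega) (by omega) 4 (by omega),
        tS1_eq hn (x:ℤ) (by omega) (by omega) 4 (by omega),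
        inS0_eq hn (x:ℤ) (by omega) (by omega) 11 (by omega),
        inS1_eq hn (x:ℤ) (by omega) (by omega) 11 (by omega)]
      split_ifs <;> omega
    · rw [tS0_eq hn (x:ℤ) (by omega) (by omega) 4 (by omega),
        tS1_eq hn (x:ℤ) (by omega) (by omega) 4 (by omega),
        inS0_eq hn (x:ℤ) (by omega) (by omega) 12 (by omega),
        inS1_eq hn (x:ℤ) (by omega) (by omega) 12 (by omega)]
      split_ifs <;> omega
  rw [Finset.sum_congr rfl key]
  rw [Finset.sum_add_distrib, Finset.sum_const, Finset.card_range,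
    Finset.sum_add_distrib, Finset.sum_add_distrib, Finset.sum_add_distrib,
    Finset.sum_add_distrib, Finset.sum_add_distrib, Finset.sum_add_distrib,
    Finset.sum_ite_eq' (Finset.range n) 0 (fun _ => (-48:ℤ)),
    Finset.sum_ite_eq' (Finset.range n) 1 (fun _ => (8:ℤ)),
    Finset.sum_ite_eq' (Finset.range n) 2 (fun _ => (16:ℤ)),
    Finset.sum_ite_eq' (Finset.range n) 3 (fun _ => (4:ℤ)),
    Finset.sum_ite_eq' (Finset.range n) (n-3) (fun _ => (-8:ℤ)),
    Finset.sum_ite_eq' (Finset.range n) (n-2) (fun _ => (-42:ℤ)),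
    Finset.sum_ite_eq' (Finset.range n) (n-1) (fun _ => (-76:ℤ)),
    if_pos (by simp only [Finset.mem_range]; omega),
    if_pos (by simp only [Finset.mem_range]; omega),
    if_pos (by simp only [Finset.mem_range]; omega),
    if_pos (by simp only [Finset.mem_range]; omega),
    if_pos (by simp only [Finset.mem_range]; omega),
    if_pos (by simp only [Finset.mem_range]; omega),
    if_pos (by simp only [Finset.mem_range]; omega),
    tS02 hn, tS12 hn, inS02 hn, inS12 hn]
  rw [nsmul_eq_mul]
  push_cast
  ring

lemma ZC2_big {n : ℕ} (hn : 7 ≤ n) : (ZC2 n f : ℤ) = 48 * n - 58 := by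
  have hD := ZC2_double hn
  have hD' : (∑ u ∈ Sfin n, ∑ v ∈ Sfin n, if taxicab u v = 1 then tS n u * tS n v else 0)
      = 96 * n - 116 := by omega
  rw [ZC2_f (by omega), hD']
  have : (96 * n - 116) / 2 = 48 * n - 58 := by omega
  rw [this]
  push_cast [Nat.cast_sub (by omega : 58 ≤ 48 * n)]
  ring

lemma iso_dist {G H : SimpleGraph (ℤ × ℤ)} (φ : G ≃g H) (u v : ℤ × ℤ) :
    H.dist (φ u) (φ v) = G.dist u v := by
  by_cases h : G.Reachable u v
  · have h' : H.Reachable (φ u) (φ v) := SimpleGraph.Reachable.map φ.toHom h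
    apply le_antisymm
    · obtain ⟨p, hp⟩ := h.exists_walk_length_eq_dist
      calc H.dist (φ u) (φ v) ≤ (p.map φ.toHom).length := SimpleGraph.dist_le _
        _ = G.dist u v := by rw [SimpleGraph.Walk.length_map, hp]
    · obtain ⟨p, hp⟩ := h'.exists_walk_length_eq_dist
      have := SimpleGraph.dist_le (((p.map φ.symm.toHom).copy (by simp) (by simp)) : G.Walk u v)
      rwa [SimpleGraph.Walk.length_copy, SimpleGraph.Walk.length_map, hp] at this
  · have h' : ¬ H.Reachable (φ u) (φ v) := fun hr => h (by
      have := SimpleGraph.Reachable.map φ.symm.toHom hr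
      simpa using this)
    rw [SimpleGraph.dist_eq_zero_of_not_reachable h,
      SimpleGraph.dist_eq_zero_of_not_reachable h']

def sigEq (sw : Bool) (e1 e2 a b : ℤ) (h1 : e1 = 1 ∨ e1 = -1) (h2 : e2 = 1 ∨ e2 = -1) :
    (ℤ × ℤ) ≃ (ℤ × ℤ) where
  toFun p := (a + e1 * (if sw then p.2 else p.1), b + e2 * (if sw then p.1 else p.2))
  invFun q := if sw then (e2 * (q.2 - b), e1 * (q.1 - a)) else (e1 * (q.1 - a), e2 * (q.2 - b))
  left_inv p := by
    obtain ⟨x, y⟩ := p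
    rcases h1 with rfl | rfl <;> rcases h2 with rfl | rfl <;> cases sw <;>
      simp [Prod.ext_iff] <;> constructor <;> ring
  right_inv q := by
    obtain ⟨x, y⟩ := q
    rcases h1 with rfl | rfl <;> rcases h2 with rfl | rfl <;> cases sw <;>
      simp [Prod.ext_iff] <;> constructor <;> ring

lemma sig_taxi (sw : Bool) (e1 e2 a b : ℤ) (h1 : e1 = 1 ∨ e1 = -1) (h2 : e2 = 1 ∨ e2 = -1)
    (p q : ℤ × ℤ) : taxicab (sigEq sw e1 e2 a b h1 h2 p) (sigEq sw e1 e2 a b h1 h2 q)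
      = taxicab p q := by
  obtain ⟨x, y⟩ := p
  obtain ⟨x', y'⟩ := q
  rcases h1 with rfl | rfl <;> rcases h2 with rfl | rfl <;> cases sw <;>
    simp [sigEq, taxicab] <;> omega

lemma sig_sq (sw : Bool) (e1 e2 a b : ℤ) (h1 : e1 = 1 ∨ e1 = -1) (h2 : e2 = 1 ∨ e2 = -1)
    (s v : ℤ × ℤ) : IsSquareCorner s v ↔ IsSquareCorner
      (a + e1 * (if sw then s.2 else s.1) + (if e1 = 1 then 0 else -1),
       b + e2 * (if sw then s.1 else s.2) + (if e2 = 1 then 0 else -1))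
      (sigEq sw e1 e2 a b h1 h2 v) := by
  obtain ⟨x, y⟩ := v
  rw [isc_iff, isc_iff]
  rcases h1 with rfl | rfl <;> rcases h2 with rfl | rfl <;> cases sw <;>
    simp [sigEq] <;> omega

lemma transfer {n : ℕ} {c : ℕ → ℤ × ℤ} (σ : (ℤ × ℤ) ≃ (ℤ × ℤ))
    (htaxi : ∀ p q, taxicab (σ p) (σ q) = taxicab p q)
    (hsq : ∀ i, i < n → ∀ v, IsSquareCorner (f i) v ↔ IsSquareCorner (c i) (σ v)) :
    ZC1 n c = ZC1 n f ∧ ZC2 n c = ZC2 n f := by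
  have hadj : ∀ u v, (chainGraph n c).Adj (σ u) (σ v) ↔ (chainGraph n f).Adj u v := by
    intro u v
    simp only [chainGraph, SimpleGraph.fromRel_adj]
    constructor
    · rintro ⟨hne, (⟨h1, i, hi, ha, hb⟩ | ⟨h1, i, hi, ha, hb⟩)⟩
      · exact ⟨fun e => hne (by rw [e]), Or.inl ⟨by rw [← htaxi u v]; exact h1,
          i, hi, (hsq i hi u).mpr ha, (hsq i hi v).mpr hb⟩⟩
      · exact ⟨fun e => hne (by rw [e]), Or.inr ⟨by rw [← htaxi v u]; exact h1,
          i, hi, (hsq i hi v).mpr ha, (hsq i hi u).mpr hb⟩⟩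
    · rintro ⟨hne, (⟨h1, i, hi, ha, hb⟩ | ⟨h1, i, hi, ha, hb⟩)⟩
      · exact ⟨fun e => hne (σ.injective e), Or.inl ⟨by rw [htaxi u v]; exact h1,
          i, hi, (hsq i hi u).mp ha, (hsq i hi v).mp hb⟩⟩
      · exact ⟨fun e => hne (σ.injective e), Or.inr ⟨by rw [htaxi v u]; exact h1,
          i, hi, (hsq i hi v).mp ha, (hsq i hi u).mp hb⟩⟩
  let φ : chainGraph n f ≃g chainGraph n c := ⟨σ, hadj _ _⟩
  have hcorn : corners n c = (corners n f).image σ := by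
    ext w
    rw [mem_corners_iff, Finset.mem_image]
    constructor
    · rintro ⟨i, hi, h⟩
      refine ⟨σ.symm w, ?_, by simp⟩
      rw [mem_corners_iff]
      exact ⟨i, hi, (hsq i hi _).mpr (by simpa using h)⟩
    · rintro ⟨v, hv, rfl⟩
      rw [mem_corners_iff] at hv
      obtain ⟨i, hi, h⟩ := hv
      exact ⟨i, hi, (hsq i hi v).mp h⟩
  have hdist : ∀ u v, (chainGraph n c).dist (σ u) (σ v) = (chainGraph n f).dist u v :=
    fun u v => iso_dist φ u v
  have htau : ∀ v, tau n c (σ v) = tau n f v := by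
    intro v
    unfold tau
    rw [Finset.card_filter, Finset.card_filter, hcorn,
      Finset.sum_image (fun a _ b _ h => σ.injective h)]
    exact Finset.sum_congr rfl fun u _ => by rw [hdist v u]
  constructor
  · unfold ZC1
    rw [hcorn, Finset.sum_image (fun a _ b _ h => σ.injective h)]
    exact Finset.sum_congr rfl fun v _ => by rw [htau v]
  · unfold ZC2
    congr 1
    rw [hcorn, Finset.sum_image (fun a _ b _ h => σ.injective h)]
    refine Finset.sum_congr rfl fun u _ => ?_
    rw [Finset.sum_image (fun a _ b _ h => σ.injective h)]
    refine Finset.sum_congr rfl fun v _ => ?_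
    rw [htau u, htau v]
    by_cases h : (chainGraph n f).Adj u v
    · rw [if_pos ((hadj u v).mpr h), if_pos h]
    · rw [if_neg (fun h' => h ((hadj u v).mp h')), if_neg h]

lemma reduce {n : ℕ} {c : ℕ → ℤ × ℤ} (sw : Bool) (e1 e2 a b : ℤ)
    (h1 : e1 = 1 ∨ e1 = -1) (h2 : e2 = 1 ∨ e2 = -1)
    (hcell : ∀ i, i < n → c i =
      (a + e1 * (if sw then (f i).2 else (f i).1) + (if e1 = 1 then 0 else -1),
       b + e2 * (if sw then (f i).1 else (f i).2) + (if e2 = 1 then 0 else -1))) :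
    ZC1 n c = ZC1 n f ∧ ZC2 n c = ZC2 n f := by
  apply transfer (sigEq sw e1 e2 a b h1 h2) (sig_taxi sw e1 e2 a b h1 h2)
  intro i hi v
  rw [hcell i hi]
  exact sig_sq sw e1 e2 a b h1 h2 (f i) v

lemma ZC1_f_val {n : ℕ} (hn : 4 ≤ n) : (ZC1 n f : ℤ) = 32 * n - 30 - 2 * ind (n = 4) := by
  by_cases h4 : n = 4
  · subst h4
    rw [ZC1_f (by omega), show (∑ v ∈ Sfin 4, tS 4 v ^ 2) = 96 by decide]
    norm_num [ind]
  · by_cases h5 : n = 5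
    · subst h5
      rw [ZC1_f (by omega), show (∑ v ∈ Sfin 5, tS 5 v ^ 2) = 130 by decide]
      norm_num [ind]
    · by_cases h6 : n = 6
      · subst h6
        rw [ZC1_f (by omega), show (∑ v ∈ Sfin 6, tS 6 v ^ 2) = 162 by decide]
        norm_num [ind]
      · rw [ZC1_big (by omega), ind, if_neg h4]
        ring

lemma ZC2_f_val {n : ℕ} (hn : 5 ≤ n) : (ZC2 n f : ℤ) = 48 * n - 58 - ind (n = 5) := by
  by_cases h5 : n = 5
  · subst h5
    rw [ZC2_f (by omega), show (∑ u ∈ Sfin 5, ∑ v ∈ Sfin 5,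
      if taxicab u v = 1 then tS 5 u * tS 5 v else 0) = 362 by decide]
    norm_num [ind]
  · by_cases h6 : n = 6
    · subst h6
      rw [ZC2_f (by omega), show (∑ u ∈ Sfin 6, ∑ v ∈ Sfin 6,
        if taxicab u v = 1 then tS 6 u * tS 6 v else 0) = 460 by decide]
      norm_num [ind]
    · rw [ZC2_big (by omega), ind, if_neg h5]
      ring

/-- **Corollary 2.3.** For the polyomino chain `PC_n¹` with two segments of
lengths `l₁ = 2` and `l₂ = n - 1`:
`ZC1 = 32n - 30 - 2·I{n = 4}` for `n ≥ 4`, and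
`ZC2 = 48n - 58 - I{n = 5}` for `n ≥ 5`. -/
theorem ZC_formula_PC1
    (n : ℕ) (c : ℕ → ℤ × ℤ) (l : ℕ → ℕ)
    (hc : IsPolyominoChain n c) (hs : HasSegments n c 2 l)
    (hl1 : l 1 = 2) (hl2 : (l 2 : ℤ) = (n : ℤ) - 1) :
    (4 ≤ n → (ZC1 n c : ℤ) = 32 * (n : ℤ) - 30 - 2 * ind (n = 4)) ∧
    (5 ≤ n → (ZC2 n c : ℤ) = 48 * (n : ℤ) - 58 - ind (n = 5)) := by
  obtain ⟨hinj, hadjiff⟩ := hc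
  obtain ⟨k, hk0, hkm, hmono, hlink, hlen⟩ := hs
  have hred : 4 ≤ n → ZC1 n c = ZC1 n f ∧ ZC2 n c = ZC2 n f := by
    intro hn4
    have hk1 : k 1 = 3 := by
      have e1 := hlen 1 (by omega) (by omega)
      have m1 := hmono 1 (by omega) (by omega)
      norm_num at e1 m1
      omega
    have hlink3 : link c 3 = 2 := (hlink 3 (by omega) (by omega)).mpr ⟨1, by omega, by omega, hk1⟩
    have hlinko : ∀ x, 4 ≤ x → x ≤ n → ¬ link c x = 2 := by
      intro x h4 hxn hcon
      obtain ⟨j, hj1, hj2, hjx⟩ := (hlink x (by omega) hxn).mp hcon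
      have hj : j = 1 := by omega
      rw [hj] at hjx
      omega
    have hlinkone : ∀ x, 1 ≤ x → x + 3 ≤ n → c (x+2) - c (x+1) = c (x+1) - c x := by
      intro x h1 hxn
      have h := hlinko (x+3) (by omega) (by omega)
      unfold link at h
      by_cases hcond : c (x+3-1) - c (x+3-2) = c (x+3-2) - c (x+3-3)
      · have hx1 : x+3-1 = x+2 := by omega
        have hx2 : x+3-2 = x+1 := by omega
        have hx3 : x+3-3 = x := by omega
        rw [hx1, hx2, hx3] at hcond
        exact hcond
      · rw [if_neg hcond] at h
        omega
    have hlink3' : ¬ (c 2 - c 1 = c 1 - c 0) := by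
      intro hcon
      unfold link at hlink3
      norm_num at hlink3
      exact hlink3 hcon
    have t01 : taxicab (c 0) (c 1) = 1 := (hadjiff 0 1 (by omega) (by omega)).mpr (by omega)
    have t12 : taxicab (c 1) (c 2) = 1 := (hadjiff 1 2 (by omega) (by omega)).mpr (by omega)
    have hne02 : ¬((c 2).1 = (c 0).1 ∧ (c 2).2 = (c 0).2) := by
      rintro ⟨u1, u2⟩
      have h20 : c 2 = c 0 := Prod.ext u1 u2
      have := hinj 2 0 (by omega) (by omega) h20
      omega
    have hne_ed : ¬((c 2).1 - (c 1).1 = (c 1).1 - (c 0).1 ∧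
        (c 2).2 - (c 1).2 = (c 1).2 - (c 0).2) := by
      rintro ⟨u1, u2⟩
      apply hlink3'
      rw [Prod.ext_iff]
      constructor <;> simp only [Prod.fst_sub, Prod.snd_sub] <;> omega
    have hstep : ∀ i, 1 ≤ i → i + 1 < n → c (i+1) - c i = c 2 - c 1 := by
      intro i h1 h2
      induction i with
      | zero => omega
      | succ j ih =>
        rcases Nat.lt_or_ge j 1 with hj | hj
        · have hj0 : j = 0 := by omega
          subst hj0; rfl
        · have e1 : c (j+1+1) - c (j+1) = c (j+1) - c j := hlinkone j hj (by omega)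
          rw [e1]
          exact ih (by omega) (by omega)
    have hform : ∀ i, 1 ≤ i → i < n →
        (c i).1 = (c 1).1 + ((i:ℤ) - 1) * ((c 2).1 - (c 1).1) ∧
        (c i).2 = (c 1).2 + ((i:ℤ) - 1) * ((c 2).2 - (c 1).2) := by
      intro i h1 h2
      induction i with
      | zero => omega
      | succ j ih =>
        rcases Nat.lt_or_ge j 1 with hj | hj
        · have hj0 : j = 0 := by omega
          subst hj0
          constructor <;> push_cast <;> ring
        · obtain ⟨ih1, ih2⟩ := ih (by omega) (by omega)
          have hstp := hstep j hj (by omega)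
          have hsx := congrArg Prod.fst hstp
          have hsy := congrArg Prod.snd hstp
          simp only [Prod.fst_sub, Prod.snd_sub] at hsx hsy
          constructor
          · push_cast
            linear_combination hsx + ih1
          · push_cast
            linear_combination hsy + ih2
    have hcd : ((c 1).1 - (c 0).1 = 0 ∧ ((c 1).2 - (c 0).2 = 1 ∨ (c 1).2 - (c 0).2 = -1)) ∨
        ((c 1).2 - (c 0).2 = 0 ∧ ((c 1).1 - (c 0).1 = 1 ∨ (c 1).1 - (c 0).1 = -1)) := by
      unfold taxicab at t01; omega
    have hce : (((c 2).1 - (c 1).1 = 0 ∧ ((c 2).2 - (c 1).2 = 1 ∨ (c 2).2 - (c 1).2 = -1)) ∨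
        ((c 2).2 - (c 1).2 = 0 ∧ ((c 2).1 - (c 1).1 = 1 ∨ (c 2).1 - (c 1).1 = -1))) := by
      unfold taxicab at t12; omega
    rcases hce with ⟨hex, hey | hey⟩ | ⟨hey, hex | hex⟩ <;>
      rcases hcd with ⟨hdx, hdy | hdy⟩ | ⟨hdy, hdx | hdx⟩
    · exfalso; omega
    · exfalso; omega
    · refine reduce true (-1) (1) ((c 1).1 + 1) ((c 1).2) (by norm_num) (by norm_num) ?_
      intro i hi
      rcases Nat.eq_zero_or_pos i with rfl | hip
      · rw [Prod.ext_iff]; simp [f]; omega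
      · rw [Prod.ext_iff]
        obtain ⟨h1f, h2f⟩ := hform i (by omega) hi
        rw [hex] at h1f
        rw [hey] at h2f
        simp [f, if_neg (by omega : ¬ i = 0)]
        omega
    · refine reduce true (1) (1) ((c 1).1) ((c 1).2) (by norm_num) (by norm_num) ?_
      intro i hi
      rcases Nat.eq_zero_or_pos i with rfl | hip
      · rw [Prod.ext_iff]; simp [f]; omega
      · rw [Prod.ext_iff]
        obtain ⟨h1f, h2f⟩ := hform i (by omega) hi
        rw [hex] at h1f
        rw [hey] at h2f
        simp [f, if_neg (by omega : ¬ i = 0)]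
        omega
    · exfalso; omega
    · exfalso; omega
    · refine reduce true (-1) (-1) ((c 1).1 + 1) ((c 1).2 + 1) (by norm_num) (by norm_num) ?_
      intro i hi
      rcases Nat.eq_zero_or_pos i with rfl | hip
      · rw [Prod.ext_iff]; simp [f]; omega
      · rw [Prod.ext_iff]
        obtain ⟨h1f, h2f⟩ := hform i (by omega) hi
        rw [hex] at h1f
        rw [hey] at h2f
        simp [f, if_neg (by omega : ¬ i = 0)]
        omega
    · refine reduce true (1) (-1) ((c 1).1) ((c 1).2 + 1) (by norm_num) (by norm_num) ?_
      intro i hi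
      rcases Nat.eq_zero_or_pos i with rfl | hip
      · rw [Prod.ext_iff]; simp [f]; omega
      · rw [Prod.ext_iff]
        obtain ⟨h1f, h2f⟩ := hform i (by omega) hi
        rw [hex] at h1f
        rw [hey] at h2f
        simp [f, if_neg (by omega : ¬ i = 0)]
        omega
    · refine reduce false (1) (-1) ((c 1).1) ((c 1).2 + 1) (by norm_num) (by norm_num) ?_
      intro i hi
      rcases Nat.eq_zero_or_pos i with rfl | hip
      · rw [Prod.ext_iff]; simp [f]; omega
      · rw [Prod.ext_iff]
        obtain ⟨h1f, h2f⟩ := hform i (by omega) hi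
        rw [hex] at h1f
        rw [hey] at h2f
        simp [f, if_neg (by omega : ¬ i = 0)]
        omega
    · refine reduce false (1) (1) ((c 1).1) ((c 1).2) (by norm_num) (by norm_num) ?_
      intro i hi
      rcases Nat.eq_zero_or_pos i with rfl | hip
      · rw [Prod.ext_iff]; simp [f]; omega
      · rw [Prod.ext_iff]
        obtain ⟨h1f, h2f⟩ := hform i (by omega) hi
        rw [hex] at h1f
        rw [hey] at h2f
        simp [f, if_neg (by omega : ¬ i = 0)]
        omega
    · exfalso; omega
    · exfalso; omega
    · refine reduce false (-1) (-1) ((c 1).1 + 1) ((c 1).2 + 1) (by norm_num) (by norm_num) ?_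
      intro i hi
      rcases Nat.eq_zero_or_pos i with rfl | hip
      · rw [Prod.ext_iff]; simp [f]; omega
      · rw [Prod.ext_iff]
        obtain ⟨h1f, h2f⟩ := hform i (by omega) hi
        rw [hex] at h1f
        rw [hey] at h2f
        simp [f, if_neg (by omega : ¬ i = 0)]
        omega
    · refine reduce false (-1) (1) ((c 1).1 + 1) ((c 1).2) (by norm_num) (by norm_num) ?_
      intro i hi
      rcases Nat.eq_zero_or_pos i with rfl | hip
      · rw [Prod.ext_iff]; simp [f]; omega
      · rw [Prod.ext_iff]
        obtain ⟨h1f, h2f⟩ := hform i (by omega) hi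
        rw [hex] at h1f
        rw [hey] at h2f
        simp [f, if_neg (by omega : ¬ i = 0)]
        omega
    · exfalso; omega
    · exfalso; omega
  constructor
  · intro h4
    rw [(hred h4).1]
    exact ZC1_f_val h4
  · intro h5
    rw [(hred (by omega)).2]
    exact ZC2_f_val h5
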